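/- For every k ∈ ℕ one has λ_k ≤ β. -/

import Mathlib

open MeasureTheory Filter Topology

noncomputable section

/-- Euclidean space `ℝ^N`. -/
abbrev Vec (N : ℕ) := EuclideanSpace ℝ (Fin N)

/-- The (squared) Gagliardo seminorm
`[u]² = ∫∫ |u(x)-u(y)|² / |x-y|^(N+2s) dx dy`. -/
def gagliardo (N : ℕ) (s : ℝ) (u : Vec N → ℝ) : ℝ :=
  ∫ p : Vec N × Vec N, (u p.1 - u p.2) ^ 2 / ‖p.1 - p.2‖ ^ ((N : ℝ) + 2 * s)

/-- `u ∈ H^s(ℝ^N)`: `u ∈ L²` and the Gagliardo integrand is integrable. -/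
def memHs (N : ℕ) (s : ℝ) (u : Vec N → ℝ) : Prop :=
  MemLp u 2 (volume : Measure (Vec N)) ∧
    Integrable (fun p : Vec N × Vec N =>
      (u p.1 - u p.2) ^ 2 / ‖p.1 - p.2‖ ^ ((N : ℝ) + 2 * s)) volume

/-- The functional `Φ(u) = [u]² + β ∫ g u²`. -/
def Phi (N : ℕ) (s β : ℝ) (g : Vec N → ℝ) (u : Vec N → ℝ) : ℝ :=
  gagliardo N s u + β * ∫ x : Vec N, g x * u x ^ 2

/-- Assumption (g₁): `g` is bounded measurable with `0 ≤ g ≤ 1`, `g → 1` at infinity,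
and `{g < 1}` has positive measure. -/
def g1cond (N : ℕ) (g : Vec N → ℝ) : Prop :=
  Measurable g ∧ (∀ x, 0 ≤ g x ∧ g x ≤ 1) ∧
    Tendsto g (cocompact (Vec N)) (𝓝 1) ∧
    0 < volume {x : Vec N | g x < 1}

/-- The constraint set `Σ = {u ∈ H^s : ∫ u² = 1}`. -/
def SigmaSet (N : ℕ) (s : ℝ) : Set (Vec N → ℝ) :=
  {u | memHs N s u ∧ ∫ x : Vec N, u x ^ 2 = 1}

/-- Distance induced by the `H^s` norm `‖u‖² = [u]² + β ‖u‖₂²`. -/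
def hsDist (N : ℕ) (s β : ℝ) (u v : Vec N → ℝ) : ℝ :=
  Real.sqrt (gagliardo N s (u - v) + β * ∫ x : Vec N, (u x - v x) ^ 2)

/-- Sequential compactness of a set with respect to the `H^s` distance. -/
def IsHsCompact (N : ℕ) (s β : ℝ) (A : Set (Vec N → ℝ)) : Prop :=
  ∀ f : ℕ → Vec N → ℝ, (∀ n, f n ∈ A) →
    ∃ u ∈ A, ∃ φ : ℕ → ℕ, StrictMono φ ∧
      Tendsto (fun n => hsDist N s β (f (φ n)) u) atTop (𝓝 0)

/-- Continuity on a set `A ⊆ H^s` of a map into `ℝ^m`, with respect to the `H^s` distance. -/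
def HsContOn (N : ℕ) (s β : ℝ) {m : ℕ} (A : Set (Vec N → ℝ))
    (h : (Vec N → ℝ) → EuclideanSpace ℝ (Fin m)) : Prop :=
  ∀ u ∈ A, ∀ ε > 0, ∃ δ > 0, ∀ v ∈ A, hsDist N s β u v < δ → dist (h v) (h u) < ε

/-- The Krasnoselskii genus of `A` is at least `k`: for every `m < k` there is no
continuous odd map `A → ℝ^m \ {0}`. -/
def genusGE (N : ℕ) (s β : ℝ) (A : Set (Vec N → ℝ)) (k : ℕ) : Prop :=
  ∀ m : ℕ, m < k →
    ¬ ∃ h : (Vec N → ℝ) → EuclideanSpace ℝ (Fin m),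
      HsContOn N s β A h ∧ (∀ u ∈ A, h (-u) = -h u) ∧ ∀ u ∈ A, h u ≠ 0

/-- The class `Σ_k` of compact symmetric subsets of `Σ` with genus at least `k`. -/
def SigmaK (N : ℕ) (s β : ℝ) (k : ℕ) : Set (Set (Vec N → ℝ)) :=
  {A | A ⊆ SigmaSet N s ∧ IsHsCompact N s β A ∧ (∀ u ∈ A, -u ∈ A) ∧ genusGE N s β A k}

/-- The minimax levels `λ_k = inf_{A ∈ Σ_k} sup_{u ∈ A} Φ(u)`. -/
def lambdaK (N : ℕ) (s β : ℝ) (g : Vec N → ℝ) (k : ℕ) : ℝ :=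
  sInf {c | ∃ A ∈ SigmaK N s β k, c = sSup (Phi N s β g '' A)}

/-- `(lam, u)` is an eigenpair of `L_β = (-Δ)^s + β g`: `u ∈ H^s`, `u ≠ 0`, and the weak
eigenvalue equation holds against every test function `φ ∈ H^s`. -/
def IsEigenpair (N : ℕ) (s β : ℝ) (g : Vec N → ℝ) (lam : ℝ) (u : Vec N → ℝ) : Prop :=
  memHs N s u ∧ ¬ u =ᵐ[(volume : Measure (Vec N))] 0 ∧
    ∀ φ : Vec N → ℝ, memHs N s φ →
      (∫ p : Vec N × Vec N,
          (u p.1 - u p.2) * (φ p.1 - φ p.2) / ‖p.1 - p.2‖ ^ ((N : ℝ) + 2 * s)) +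
        β * ∫ x : Vec N, g x * u x * φ x = lam * ∫ x : Vec N, u x * φ x

/-- The first eigenvalue `λ₁ = inf_{u ∈ Σ} Φ(u)`. -/
def lambda1 (N : ℕ) (s β : ℝ) (g : Vec N → ℝ) : ℝ :=
  sInf (Phi N s β g '' SigmaSet N s)

/-!
Dilating `u ↦ λ^{N/2} u(λ ·)` preserves the `L²` norm and multiplies the Gagliardo seminorm
by `λ^{2s}`; for `λ ≤ 1` it is moreover an `H^s`-contraction commuting with `u ↦ -u`, so it maps
`Σ_k` into itself. Since `0 ≤ g ≤ 1`, on the dilated set `Φ ≤ λ^{2s} M + β`, where `M` bounds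
`[u]²` on the original set, and letting `λ → 0` gives `λ_k ≤ β`.
-/

-- Instance search does not see `volume` on a product as a `Measure.prod`.
instance (N : ℕ) : Measure.IsAddHaarMeasure (volume : Measure (Vec N × Vec N)) :=
  Measure.prod.instIsAddHaarMeasure _ _

def gagliardoIntegrand (N : ℕ) (s : ℝ) (u : Vec N → ℝ) (p : Vec N × Vec N) : ℝ :=
  (u p.1 - u p.2) ^ 2 / ‖p.1 - p.2‖ ^ ((N : ℝ) + 2 * s)

lemma gagliardo_eq_integral (N : ℕ) (s : ℝ) (u : Vec N → ℝ) :
    gagliardo N s u = ∫ p, gagliardoIntegrand N s u p := rfl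

lemma gagliardo_nonneg (N : ℕ) (s : ℝ) (u : Vec N → ℝ) : 0 ≤ gagliardo N s u :=
  integral_nonneg fun _ => div_nonneg (sq_nonneg _) (Real.rpow_nonneg (norm_nonneg _) _)

lemma Phi_nonneg {N : ℕ} {s β : ℝ} (hβ : 0 ≤ β) {g : Vec N → ℝ} (hg : ∀ x, 0 ≤ g x)
    (u : Vec N → ℝ) : 0 ≤ Phi N s β g u :=
  add_nonneg (gagliardo_nonneg N s u)
    (mul_nonneg hβ (integral_nonneg fun x => mul_nonneg (hg x) (sq_nonneg _)))

lemma gagliardo_le_Phi {N : ℕ} {s β : ℝ} (hβ : 0 ≤ β) {g : Vec N → ℝ} (hg : ∀ x, 0 ≤ g x)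
    (u : Vec N → ℝ) : gagliardo N s u ≤ Phi N s β g u :=
  le_add_of_nonneg_right
    (mul_nonneg hβ (integral_nonneg fun x => mul_nonneg (hg x) (sq_nonneg _)))

lemma integral_mul_sq_le_one {N : ℕ} {s : ℝ} {g : Vec N → ℝ} (hg : ∀ x, 0 ≤ g x ∧ g x ≤ 1)
    {u : Vec N → ℝ} (hu : u ∈ SigmaSet N s) : ∫ x, g x * u x ^ 2 ≤ 1 := by
  rw [← hu.2]
  refine integral_mono_of_nonneg (.of_forall fun x => mul_nonneg (hg x).1 (sq_nonneg _))
    hu.1.1.integrable_sq (.of_forall fun x => ?_)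
  exact mul_le_of_le_one_left (sq_nonneg _) (hg x).2

lemma Phi_le_gagliardo_add {N : ℕ} {s β : ℝ} (hβ : 0 ≤ β) {g : Vec N → ℝ}
    (hg : ∀ x, 0 ≤ g x ∧ g x ≤ 1) {u : Vec N → ℝ} (hu : u ∈ SigmaSet N s) :
    Phi N s β g u ≤ gagliardo N s u + β := by
  have := mul_le_mul_of_nonneg_left (integral_mul_sq_le_one hg hu) hβ
  rw [Phi]
  linarith

section Dilation

variable {N : ℕ} {s β lam : ℝ}

def dilate (N : ℕ) (lam : ℝ) (u : Vec N → ℝ) : Vec N → ℝ :=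
  fun x => lam ^ ((N : ℝ) / 2) * u (lam • x)

lemma dilate_sub (u v : Vec N → ℝ) : dilate N lam (u - v) = dilate N lam u - dilate N lam v := by
  funext x
  simp [dilate, mul_sub]

lemma dilate_neg (u : Vec N → ℝ) : dilate N lam (-u) = -dilate N lam u := by
  funext x
  simp [dilate]

lemma rpow_half_mul_sq (hlam : 0 < lam) (c : ℝ) :
    (lam ^ ((N : ℝ) / 2) * c) ^ 2 = lam ^ N * c ^ 2 := by
  rw [mul_pow, ← Real.rpow_natCast (lam ^ _), ← Real.rpow_mul hlam.le]
  norm_num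

lemma sq_dilate (hlam : 0 < lam) (u : Vec N → ℝ) (x : Vec N) :
    dilate N lam u x ^ 2 = lam ^ N * u (lam • x) ^ 2 :=
  rpow_half_mul_sq hlam _

lemma integral_sq_dilate (hlam : 0 < lam) (u : Vec N → ℝ) :
    ∫ x, dilate N lam u x ^ 2 = ∫ x, u x ^ 2 := by
  simp_rw [sq_dilate hlam]
  rw [integral_const_mul, Measure.integral_comp_smul_of_nonneg volume (fun y => u y ^ 2) lam
    (hR := hlam.le), finrank_euclideanSpace_fin, smul_eq_mul]
  field_simp

lemma memLp_two_dilate (hlam : 0 < lam) {u : Vec N → ℝ} (hu : MemLp u 2 volume) :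
    MemLp (dilate N lam u) 2 volume := by
  have hmeas : AEStronglyMeasurable (dilate N lam u) volume :=
    (hu.aestronglyMeasurable.comp_quasiMeasurePreserving
      (Measure.quasiMeasurePreserving_smul volume hlam.ne')).const_mul _
  refine (memLp_two_iff_integrable_sq hmeas).2 ?_
  simp_rw [sq_dilate hlam]
  exact (hu.integrable_sq.comp_smul hlam.ne').const_mul _

lemma gagliardoIntegrand_dilate (hlam : 0 < lam) (u : Vec N → ℝ) (p : Vec N × Vec N) :
    gagliardoIntegrand N s (dilate N lam u) p
      = lam ^ N * lam ^ ((N : ℝ) + 2 * s) * gagliardoIntegrand N s u (lam • p) := by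
  have hden : ‖lam • p.1 - lam • p.2‖ ^ ((N : ℝ) + 2 * s)
      = lam ^ ((N : ℝ) + 2 * s) * ‖p.1 - p.2‖ ^ ((N : ℝ) + 2 * s) := by
    rw [← smul_sub, norm_smul, Real.norm_eq_abs, abs_of_pos hlam,
      Real.mul_rpow hlam.le (norm_nonneg _)]
  have hnum : (dilate N lam u p.1 - dilate N lam u p.2) ^ 2
      = lam ^ N * (u (lam • p.1) - u (lam • p.2)) ^ 2 := by
    rw [dilate, dilate, ← mul_sub, rpow_half_mul_sq hlam]
  have hpos : 0 < lam ^ ((N : ℝ) + 2 * s) := Real.rpow_pos_of_pos hlam _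
  simp only [gagliardoIntegrand, Prod.smul_fst, Prod.smul_snd, hnum, hden]
  field_simp

lemma integrable_gagliardoIntegrand_dilate (hlam : 0 < lam) {u : Vec N → ℝ}
    (hu : Integrable (gagliardoIntegrand N s u)) :
    Integrable (gagliardoIntegrand N s (dilate N lam u)) := by
  simp_rw [funext (gagliardoIntegrand_dilate hlam u)]
  exact (hu.comp_smul hlam.ne').const_mul _

lemma gagliardo_dilate (hlam : 0 < lam) (u : Vec N → ℝ) :
    gagliardo N s (dilate N lam u) = lam ^ (2 * s) * gagliardo N s u := by
  simp_rw [gagliardo_eq_integral, gagliardoIntegrand_dilate hlam]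
  rw [integral_const_mul, Measure.integral_comp_smul_of_nonneg volume _ lam (hR := hlam.le),
    Module.finrank_prod, finrank_euclideanSpace_fin, smul_eq_mul,
    Real.rpow_add hlam, Real.rpow_natCast]
  field_simp
  ring

lemma memHs_dilate (hlam : 0 < lam) {u : Vec N → ℝ} (hu : memHs N s u) :
    memHs N s (dilate N lam u) :=
  ⟨memLp_two_dilate hlam hu.1, integrable_gagliardoIntegrand_dilate hlam hu.2⟩

lemma dilate_mem_SigmaSet (hlam : 0 < lam) {u : Vec N → ℝ} (hu : u ∈ SigmaSet N s) :
    dilate N lam u ∈ SigmaSet N s :=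
  ⟨memHs_dilate hlam hu.1, (integral_sq_dilate hlam u).trans hu.2⟩

lemma hsDist_dilate_le (hs : 0 ≤ s) (hlam : 0 < lam) (hlam1 : lam ≤ 1) (u v : Vec N → ℝ) :
    hsDist N s β (dilate N lam u) (dilate N lam v) ≤ hsDist N s β u v := by
  have hL2 : ∫ x, (dilate N lam u x - dilate N lam v x) ^ 2 = ∫ x, (u x - v x) ^ 2 := by
    simpa only [dilate_sub, Pi.sub_apply] using integral_sq_dilate hlam (u - v)
  have hsemi : gagliardo N s (dilate N lam u - dilate N lam v) ≤ gagliardo N s (u - v) := by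
    rw [← dilate_sub, gagliardo_dilate hlam]
    exact mul_le_of_le_one_left (gagliardo_nonneg N s _)
      (Real.rpow_le_one hlam.le hlam1 (by linarith))
  unfold hsDist
  rw [hL2]
  gcongr

end Dilation

section Invariance

variable {N : ℕ} {s β : ℝ} {T : (Vec N → ℝ) → Vec N → ℝ}

lemma IsHsCompact.image_of_hsDist_le
    (hT : ∀ u v, hsDist N s β (T u) (T v) ≤ hsDist N s β u v) {A : Set (Vec N → ℝ)}
    (hA : IsHsCompact N s β A) : IsHsCompact N s β (T '' A) := by
  intro f hf
  choose w hwA hfw using hf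
  obtain ⟨u, huA, φ, hφ, hlim⟩ := hA w hwA
  refine ⟨T u, Set.mem_image_of_mem _ huA, φ, hφ,
    squeeze_zero (fun _ => Real.sqrt_nonneg _) (fun n => ?_) hlim⟩
  rw [← hfw (φ n)]
  exact hT _ _

lemma genusGE.image_of_hsDist_le
    (hT : ∀ u v, hsDist N s β (T u) (T v) ≤ hsDist N s β u v) (hodd : ∀ u, T (-u) = -T u)
    {A : Set (Vec N → ℝ)} {k : ℕ} (hA : genusGE N s β A k) : genusGE N s β (T '' A) k := by
  rintro m hm ⟨h, hcont, hhodd, hne⟩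
  refine hA m hm ⟨h ∘ T, fun u hu ε hε => ?_, fun u hu => ?_, fun u hu => ?_⟩
  · obtain ⟨δ, hδ, hδε⟩ := hcont (T u) (Set.mem_image_of_mem _ hu) ε hε
    exact ⟨δ, hδ, fun v hv huv =>
      hδε (T v) (Set.mem_image_of_mem _ hv) ((hT u v).trans_lt huv)⟩
  · simpa only [Function.comp_apply, hodd] using hhodd (T u) (Set.mem_image_of_mem _ hu)
  · exact hne (T u) (Set.mem_image_of_mem _ hu)

lemma image_mem_SigmaK (hmaps : ∀ u ∈ SigmaSet N s, T u ∈ SigmaSet N s)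
    (hT : ∀ u v, hsDist N s β (T u) (T v) ≤ hsDist N s β u v) (hodd : ∀ u, T (-u) = -T u)
    {k : ℕ} {A : Set (Vec N → ℝ)} (hA : A ∈ SigmaK N s β k) : T '' A ∈ SigmaK N s β k := by
  obtain ⟨hsub, hcomp, hsymm, hgenus⟩ := hA
  refine ⟨?_, hcomp.image_of_hsDist_le hT, ?_, hgenus.image_of_hsDist_le hT hodd⟩
  · rintro _ ⟨u, hu, rfl⟩
    exact hmaps u (hsub hu)
  · rintro _ ⟨u, hu, rfl⟩
    exact ⟨-u, hsymm u hu, hodd u⟩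

end Invariance

section MinimaxBound

variable {N : ℕ} {s β : ℝ} {g : Vec N → ℝ} {k : ℕ}

lemma lambdaK_le_sSup (hβ : 0 ≤ β) (hg : ∀ x, 0 ≤ g x) {A : Set (Vec N → ℝ)}
    (hA : A ∈ SigmaK N s β k) : lambdaK N s β g k ≤ sSup (Phi N s β g '' A) := by
  refine csInf_le ⟨0, ?_⟩ ⟨A, hA, rfl⟩
  rintro _ ⟨B, -, rfl⟩
  exact Real.sSup_nonneg (by rintro _ ⟨u, -, rfl⟩; exact Phi_nonneg hβ hg u)

lemma lambdaK_eq_zero_of_SigmaK_eq_empty (h : SigmaK N s β k = ∅) : lambdaK N s β g k = 0 := by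
  simp [lambdaK, h]

lemma lambdaK_le_rpow_mul_add (hs : 0 < s) (hβ : 0 ≤ β) (hg : ∀ x, 0 ≤ g x ∧ g x ≤ 1)
    {A : Set (Vec N → ℝ)} (hA : A ∈ SigmaK N s β k) {M : ℝ} (hM0 : 0 ≤ M)
    (hM : ∀ u ∈ A, gagliardo N s u ≤ M) {lam : ℝ} (hlam : 0 < lam) (hlam1 : lam ≤ 1) :
    lambdaK N s β g k ≤ lam ^ (2 * s) * M + β := by
  have hdil : dilate N lam '' A ∈ SigmaK N s β k :=
    image_mem_SigmaK (fun u => dilate_mem_SigmaSet hlam) (hsDist_dilate_le hs.le hlam hlam1)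
      dilate_neg hA
  refine (lambdaK_le_sSup hβ (fun x => (hg x).1) hdil).trans
    (Real.sSup_le ?_ (by positivity))
  rintro _ ⟨_, ⟨u, hu, rfl⟩, rfl⟩
  calc Phi N s β g (dilate N lam u)
      ≤ gagliardo N s (dilate N lam u) + β := Phi_le_gagliardo_add hβ hg (hdil.1 ⟨u, hu, rfl⟩)
    _ ≤ lam ^ (2 * s) * M + β := by
      rw [gagliardo_dilate hlam]
      gcongr
      exact hM u hu

end MinimaxBound

theorem lambdaK_le_beta_general (N : ℕ) (s β : ℝ) (hs : s ∈ Set.Ioo (0 : ℝ) 1)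
    (hβ : 0 < β) (g : Vec N → ℝ) (hg : g1cond N g) :
    ∀ k : ℕ, 1 ≤ k → lambdaK N s β g k ≤ β := by
  intro k _
  have hg01 := hg.2.1
  -- In `ℝ`, `sInf ∅ = 0` and `sSup` of an unbounded set is `0`: this settles the degenerate cases.
  rcases Set.eq_empty_or_nonempty (SigmaK N s β k) with hempty | ⟨A, hA⟩
  · rw [lambdaK_eq_zero_of_SigmaK_eq_empty hempty]
    exact hβ.le
  by_cases hbdd : BddAbove (Phi N s β g '' A)
  swap
  · exact (lambdaK_le_sSup hβ.le (fun x => (hg01 x).1) hA).trans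
      ((Real.sSup_of_not_bddAbove hbdd).trans_le hβ.le)
  obtain ⟨M, hM0, hM⟩ := hbdd.exists_ge 0
  have hsemi (u) (hu : u ∈ A) : gagliardo N s u ≤ M :=
    (gagliardo_le_Phi hβ.le (fun x => (hg01 x).1) u).trans (hM _ ⟨u, hu, rfl⟩)
  have hlim : Tendsto (fun lam : ℝ => lam ^ (2 * s) * M + β) (𝓝[>] 0) (𝓝 β) := by
    have h := (Real.continuousAt_rpow_const 0 (2 * s) (Or.inr (by linarith [hs.1]))).tendsto
    rw [Real.zero_rpow (by linarith [hs.1])] at h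
    simpa using ((h.mono_left nhdsWithin_le_nhds).mul_const M).add_const β
  refine ge_of_tendsto hlim ?_
  filter_upwards [Ioo_mem_nhdsGT one_pos] with lam hlam
  exact lambdaK_le_rpow_mul_add hs.1 hβ.le hg01 hA hM0 hsemi hlam.1 hlam.2.le

/-- every minimax level satisfies `λ_k ≤ β`. -/
theorem lambdaK_le_beta (N : ℕ) (s β : ℝ) (hs : s ∈ Set.Ioo (0 : ℝ) 1)
    (hN : 2 * s < N) (hβ : 0 < β) (g : Vec N → ℝ) (hg : g1cond N g) :
    ∀ k : ℕ, 1 ≤ k → lambdaK N s β g k ≤ β :=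
  lambdaK_le_beta_general N s β hs hβ g hg
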